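/- arXiv:1412.4376 — 2 statements merged into one kernel-verified Lean document; each statement's English description precedes it below -/
import Mathlib

section
/- Let α > 1. Then there is a constant C, depending only on α, such that for every φ ∈ L²_x one has ‖x^{−1} A_α φ‖_{L²_x} ≤ C ‖φ‖_{L²_x} and ‖x^{−1} A_α^* φ‖_{L²_x} ≤ C ‖φ‖_{L²_x}; that is, the operators (1/x)A_α and (1/x)A_α^* are bounded from L²_x to L²_x. -/
open MeasureTheory Set
open scoped ENNReal

/-- The integral operator `(A_α φ)(x) = x^{−α} ∫₀ˣ y^α φ(y) dy`. -/
noncomputable def Aa (α : ℝ) (φ : ℝ → ℝ) : ℝ → ℝ :=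
  fun x => x ^ (-α) * ∫ y in Ioo (0:ℝ) x, y ^ α * φ y

/-- The integral operator `(A_α^* φ)(x) = x^{α−1} ∫ₓ¹ y^{1−α} φ(y) dy`. -/
noncomputable def Astar (α : ℝ) (φ : ℝ → ℝ) : ℝ → ℝ :=
  fun x => x ^ (α - 1) * ∫ y in Ioo x (1:ℝ), y ^ (1 - α) * φ y

/-- The twisted derivative `D_{x,α} φ = φ' + (α/x) φ`. -/
noncomputable def Dtw (α : ℝ) (φ : ℝ → ℝ) : ℝ → ℝ :=
  fun x => deriv φ x + (α / x) * φ x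

/-- The formal adjoint `D*_{x,α} φ = −φ' + ((α−1)/x) φ`. -/
noncomputable def Dstar (α : ℝ) (φ : ℝ → ℝ) : ℝ → ℝ :=
  fun x => -deriv φ x + ((α - 1) / x) * φ x

/-- Membership in `L²_x = L²((0,1), x dx)`. -/
def MemL2x (φ : ℝ → ℝ) : Prop := IntegrableOn (fun x => φ x ^ 2 * x) (Ioo (0:ℝ) 1)

/-- The `L²_x` norm, `‖φ‖ = (∫₀¹ φ(x)² x dx)^{1/2}`. -/
noncomputable def L2xNorm (φ : ℝ → ℝ) : ℝ := Real.sqrt (∫ x in Ioo (0:ℝ) 1, φ x ^ 2 * x)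

/-- The `L²_x` norm as an extended nonnegative real, `(∫₀¹ φ(x)² x dx)^{1/2}`. -/
noncomputable def eL2x (φ : ℝ → ℝ) : ℝ≥0∞ :=
  (∫⁻ x in Ioo (0:ℝ) 1, ENNReal.ofReal (φ x ^ 2 * x)) ^ (1/2 : ℝ)

/-!
Divided by `x`, both operators integrate against power kernels on `(0,1)`:
`(A_α φ)(x) / x = ∫ 1_{y<x} x^{-α-1} y^α φ(y) dy` and
`(A_α^* φ)(x) / x = ∫ 1_{x<y} x^{α-2} y^{1-α} φ(y) dy`. Schur's test in Cauchy–Schwarz form bounds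
such an operator from `L²(w dy)` to `L²(v dx)`: factor `K² ≤ P Q` so that `v(x) ∫ P(x,y) dy ≤ C₁`
and `∫ Q(x,y) dx ≤ C₂ w(y)`. For power kernels the factors can again be taken to be power kernels
whose integrals are explicit, and with `v(x) = x`, `w(y) = y` this gives the constants `α⁻¹` for
`A_α` and `(α-1)⁻¹` for `A_α^*`.
-/

open Function

section SchurTest

variable {X Y : Type*} [MeasurableSpace X] [MeasurableSpace Y]

theorem lintegral_mul_sq_le {μ : Measure Y} {f g p q : Y → ℝ≥0∞} (hp : AEMeasurable p μ)
    (hq : AEMeasurable q μ) (hg : AEMeasurable g μ) (hf : ∀ᵐ y ∂μ, f y ^ 2 ≤ p y * q y) :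
    (∫⁻ y, f y * g y ∂μ) ^ 2 ≤ (∫⁻ y, p y ∂μ) * ∫⁻ y, q y * g y ^ 2 ∂μ := by
  have hfg : ∀ᵐ y ∂μ, f y * g y ≤ p y ^ (2⁻¹ : ℝ) * (q y * g y ^ 2) ^ (2⁻¹ : ℝ) := by
    filter_upwards [hf] with y hy
    rw [← ENNReal.mul_rpow_of_nonneg _ _ (by norm_num), ENNReal.le_rpow_inv_iff (by norm_num),
      ENNReal.rpow_two, mul_pow, ← mul_assoc]
    gcongr
  calc (∫⁻ y, f y * g y ∂μ) ^ 2
      ≤ ((∫⁻ y, p y ∂μ) ^ (2⁻¹ : ℝ) * (∫⁻ y, q y * g y ^ 2 ∂μ) ^ (2⁻¹ : ℝ)) ^ 2 := by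
        gcongr
        exact (lintegral_mono_ae hfg).trans (ENNReal.lintegral_mul_norm_pow_le hp
          (hq.mul (hg.pow_const 2)) (by norm_num) (by norm_num) (by norm_num))
    _ = (∫⁻ y, p y ∂μ) * ∫⁻ y, q y * g y ^ 2 ∂μ := by
        rw [mul_pow, ← ENNReal.rpow_two, ← ENNReal.rpow_two, ENNReal.rpow_inv_rpow two_ne_zero,
          ENNReal.rpow_inv_rpow two_ne_zero]

theorem lintegral_mul_lintegral_sq_le {μ : Measure X} {ν : Measure Y} [SFinite μ] [SFinite ν]
    {K P Q : X → Y → ℝ≥0∞} {v : X → ℝ≥0∞} {w G : Y → ℝ≥0∞} {C₁ C₂ : ℝ≥0∞}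
    (hP : ∀ x, AEMeasurable (P x) ν) (hQ : Measurable (uncurry Q)) (hw : AEMeasurable w ν)
    (hG : Measurable G) (hK : ∀ᵐ x ∂μ, ∀ᵐ y ∂ν, K x y ^ 2 ≤ P x y * Q x y)
    (h₁ : ∀ᵐ x ∂μ, v x * ∫⁻ y, P x y ∂ν ≤ C₁) (h₂ : ∀ᵐ y ∂ν, ∫⁻ x, Q x y ∂μ ≤ C₂ * w y) :
    ∫⁻ x, v x * (∫⁻ y, K x y * G y ∂ν) ^ 2 ∂μ ≤ C₁ * C₂ * ∫⁻ y, w y * G y ^ 2 ∂ν := by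
  have hQG : Measurable (uncurry fun x y => Q x y * G y ^ 2) :=
    hQ.mul ((hG.pow_const 2).comp measurable_snd)
  calc ∫⁻ x, v x * (∫⁻ y, K x y * G y ∂ν) ^ 2 ∂μ
      ≤ ∫⁻ x, C₁ * ∫⁻ y, Q x y * G y ^ 2 ∂ν ∂μ := by
        refine lintegral_mono_ae ?_
        filter_upwards [hK, h₁] with x hKx h₁x
        calc v x * (∫⁻ y, K x y * G y ∂ν) ^ 2
            ≤ v x * ((∫⁻ y, P x y ∂ν) * ∫⁻ y, Q x y * G y ^ 2 ∂ν) := by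
              gcongr
              exact lintegral_mul_sq_le (hP x) hQ.of_uncurry_left.aemeasurable
                hG.aemeasurable hKx
          _ ≤ C₁ * ∫⁻ y, Q x y * G y ^ 2 ∂ν := by
              rw [← mul_assoc]
              gcongr
    _ = C₁ * ∫⁻ y, (∫⁻ x, Q x y ∂μ) * G y ^ 2 ∂ν := by
        rw [lintegral_const_mul _ hQG.lintegral_prod_right,
          lintegral_lintegral_swap hQG.aemeasurable]
        congr 1
        exact lintegral_congr fun y => lintegral_mul_const _ hQ.of_uncurry_right
    _ ≤ C₁ * ∫⁻ y, C₂ * (w y * G y ^ 2) ∂ν := by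
        gcongr C₁ * ?_
        refine lintegral_mono_ae ?_
        filter_upwards [h₂] with y hy
        rw [← mul_assoc]
        gcongr
    _ = C₁ * C₂ * ∫⁻ y, w y * G y ^ 2 ∂ν := by
        rw [lintegral_const_mul'' C₂ (f := fun y => w y * G y ^ 2)
          (hw.mul (hG.pow_const 2).aemeasurable), mul_assoc]

end SchurTest

theorem setLIntegral_Ioo_zero_rpow {s c : ℝ} (hs : -1 < s) (hc : 0 < c) :
    ∫⁻ y in Ioo 0 c, ENNReal.ofReal (y ^ s) = ENNReal.ofReal (c ^ (s + 1) / (s + 1)) := by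
  rw [← ofReal_integral_eq_lintegral_ofReal ((intervalIntegral.integrableOn_Ioo_rpow_iff hc).2 hs)
    (ae_restrict_of_forall_mem measurableSet_Ioo fun y hy => Real.rpow_nonneg hy.1.le s),
    ← integral_Ioc_eq_integral_Ioo, ← intervalIntegral.integral_of_le hc.le,
    integral_rpow (Or.inl hs), Real.zero_rpow (by linarith), sub_zero]

theorem setLIntegral_Ioi_rpow {s c : ℝ} (hs : s < -1) (hc : 0 < c) :
    ∫⁻ x in Ioi c, ENNReal.ofReal (x ^ s) = ENNReal.ofReal (-c ^ (s + 1) / (s + 1)) := by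
  rw [← ofReal_integral_eq_lintegral_ofReal (integrableOn_Ioi_rpow_of_lt hs hc)
    (ae_restrict_of_forall_mem measurableSet_Ioi fun x hx => Real.rpow_nonneg (hc.trans hx).le s),
    integral_Ioi_rpow_of_lt hs hc]

noncomputable def hardyKernel (a b x y : ℝ) : ℝ≥0∞ :=
  if y < x then ENNReal.ofReal (x ^ a * y ^ b) else 0

section HardyKernel

variable {a b x y : ℝ}

theorem measurable_hardyKernel : Measurable (uncurry (hardyKernel a b)) :=
  Measurable.ite (measurableSet_lt measurable_snd measurable_fst) (by fun_prop) measurable_const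

theorem hardyKernel_sq (hy : 0 < y) (c d : ℝ) :
    hardyKernel a b x y ^ 2 =
      hardyKernel (a - c) (b - d) x y * hardyKernel (a + c) (b + d) x y := by
  unfold hardyKernel
  split_ifs with hyx
  · have hx := hy.trans hyx
    rw [← ENNReal.ofReal_pow (by positivity), ← ENNReal.ofReal_mul (by positivity)]
    congr 1
    rw [mul_mul_mul_comm, ← Real.rpow_add hx, ← Real.rpow_add hy, mul_pow,
      ← Real.rpow_mul_natCast hx.le, ← Real.rpow_mul_natCast hy.le]
    ring_nf
  · simp

theorem setLIntegral_hardyKernel_mul_snd (hx : x ≤ 1) (g : ℝ → ℝ≥0∞) :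
    ∫⁻ y in Ioo 0 1, hardyKernel a b x y * g y =
      ∫⁻ y in Ioo 0 x, ENNReal.ofReal (x ^ a * y ^ b) * g y := by
  have hind : ∀ y, hardyKernel a b x y * g y =
      (Iio x).indicator (fun y => ENNReal.ofReal (x ^ a * y ^ b) * g y) y := fun y => by
    simp [hardyKernel, indicator, ite_mul]
  simp_rw [hind]
  rw [lintegral_indicator measurableSet_Iio, Measure.restrict_restrict measurableSet_Iio,
    inter_comm, Ioo_inter_Iio, min_eq_right hx]

theorem setLIntegral_hardyKernel_mul_fst (hy : 0 ≤ y) (g : ℝ → ℝ≥0∞) :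
    ∫⁻ x in Ioo 0 1, hardyKernel a b x y * g x =
      ∫⁻ x in Ioo y 1, ENNReal.ofReal (x ^ a * y ^ b) * g x := by
  have hind : ∀ x, hardyKernel a b x y * g x =
      (Ioi y).indicator (fun x => ENNReal.ofReal (x ^ a * y ^ b) * g x) x := fun x => by
    simp [hardyKernel, indicator, ite_mul]
  simp_rw [hind]
  rw [lintegral_indicator measurableSet_Ioi, Measure.restrict_restrict measurableSet_Ioi,
    Ioi_inter_Ioo, max_eq_left hy]

theorem setLIntegral_hardyKernel_snd (hb : -1 < b) (hx : x ∈ Ioc 0 1) :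
    ∫⁻ y in Ioo 0 1, hardyKernel a b x y = ENNReal.ofReal (x ^ (a + b + 1) / (b + 1)) := by
  calc ∫⁻ y in Ioo 0 1, hardyKernel a b x y
      = ∫⁻ y in Ioo 0 x, ENNReal.ofReal (x ^ a) * ENNReal.ofReal (y ^ b) := by
        simpa [ENNReal.ofReal_mul (Real.rpow_nonneg hx.1.le a)]
          using setLIntegral_hardyKernel_mul_snd (a := a) (b := b) hx.2 1
    _ = ENNReal.ofReal (x ^ (a + b + 1) / (b + 1)) := by
        rw [lintegral_const_mul' _ _ ENNReal.ofReal_ne_top, setLIntegral_Ioo_zero_rpow hb hx.1,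
          ← ENNReal.ofReal_mul (Real.rpow_nonneg hx.1.le a), ← mul_div_assoc, ← Real.rpow_add hx.1,
          add_assoc]

theorem setLIntegral_hardyKernel_fst_le (ha : a < -1) (hy : 0 < y) :
    ∫⁻ x in Ioo 0 1, hardyKernel a b x y ≤ ENNReal.ofReal (y ^ (a + b + 1) / -(a + 1)) := by
  calc ∫⁻ x in Ioo 0 1, hardyKernel a b x y
      = ∫⁻ x in Ioo y 1, ENNReal.ofReal (x ^ a) * ENNReal.ofReal (y ^ b) := by
        simpa [ENNReal.ofReal_mul' (Real.rpow_nonneg hy.le b)]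
          using setLIntegral_hardyKernel_mul_fst (a := a) (b := b) hy.le 1
    _ ≤ ∫⁻ x in Ioi y, ENNReal.ofReal (x ^ a) * ENNReal.ofReal (y ^ b) :=
        lintegral_mono_set Ioo_subset_Ioi_self
    _ = ENNReal.ofReal (y ^ (a + b + 1) / -(a + 1)) := by
        rw [lintegral_mul_const' _ _ ENNReal.ofReal_ne_top, setLIntegral_Ioi_rpow ha hy,
          ← ENNReal.ofReal_mul' (by positivity), neg_div, ← div_neg, div_mul_eq_mul_div,
          ← Real.rpow_add hy]
        ring_nf

end HardyKernel

theorem setLIntegral_sq_hardyKernel_le {α : ℝ} (hα : 0 < α) {G : ℝ → ℝ≥0∞} (hG : Measurable G) :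
    ∫⁻ x in Ioo 0 1, ENNReal.ofReal x * (∫⁻ y in Ioo 0 1, hardyKernel (-α - 1) α x y * G y) ^ 2
      ≤ ENNReal.ofReal α⁻¹ ^ 2 * ∫⁻ y in Ioo 0 1, ENNReal.ofReal y * G y ^ 2 := by
  rw [sq (ENNReal.ofReal α⁻¹)]
  -- The exponents are chosen so that `x ∫ P(x,y) dy` and `(∫ Q(x,y) dx) / y` are constants.
  refine lintegral_mul_lintegral_sq_le (P := hardyKernel (-α - 1) (α - 1))
    (Q := hardyKernel (-α - 1) (α + 1))
    (fun _ => measurable_hardyKernel.of_uncurry_left.aemeasurable) measurable_hardyKernel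
    ENNReal.measurable_ofReal.aemeasurable hG ?_ ?_ ?_
  · refine ae_of_all _ fun x => ?_
    filter_upwards [ae_restrict_mem measurableSet_Ioo] with y hy
    rw [hardyKernel_sq hy.1 0 1, sub_zero, add_zero]
  · filter_upwards [ae_restrict_mem measurableSet_Ioo] with x hx
    rw [setLIntegral_hardyKernel_snd (by linarith) ⟨hx.1, hx.2.le⟩, ← ENNReal.ofReal_mul hx.1.le,
      show -α - 1 + (α - 1) + 1 = -1 by ring, Real.rpow_neg_one, sub_add_cancel]
    refine le_of_eq (congrArg ENNReal.ofReal ?_)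
    field_simp [hx.1.ne']
  · filter_upwards [ae_restrict_mem measurableSet_Ioo] with y hy
    refine (setLIntegral_hardyKernel_fst_le (by linarith) hy.1).trans_eq ?_
    rw [← ENNReal.ofReal_mul (by positivity), show -α - 1 + (α + 1) + 1 = 1 by ring,
      Real.rpow_one, show -(-α - 1 + 1) = α by ring, div_eq_inv_mul]

theorem setLIntegral_sq_hardyKernel_swap_le {α : ℝ} (hα : 1 < α) {G : ℝ → ℝ≥0∞}
    (hG : Measurable G) :
    ∫⁻ x in Ioo 0 1, ENNReal.ofReal x * (∫⁻ y in Ioo 0 1, hardyKernel (1 - α) (α - 2) y x * G y) ^ 2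
      ≤ ENNReal.ofReal (α - 1)⁻¹ ^ 2 * ∫⁻ y in Ioo 0 1, ENNReal.ofReal y * G y ^ 2 := by
  rw [sq (ENNReal.ofReal (α - 1)⁻¹)]
  have hQ : Measurable (uncurry fun x y => hardyKernel (2 - α) (α - 2) y x) :=
    measurable_hardyKernel.comp measurable_swap
  refine lintegral_mul_lintegral_sq_le (K := fun x y => hardyKernel (1 - α) (α - 2) y x)
    (P := fun x y => hardyKernel (-α) (α - 2) y x)
    (fun _ => measurable_hardyKernel.of_uncurry_right.aemeasurable)
    hQ ENNReal.measurable_ofReal.aemeasurable hG ?_ ?_ ?_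
  · filter_upwards [ae_restrict_mem measurableSet_Ioo] with x hx
    refine ae_of_all _ fun y => ?_
    rw [hardyKernel_sq hx.1 1 0, sub_zero, add_zero, show 1 - α - 1 = -α by ring,
      show 1 - α + 1 = 2 - α by ring]
  · filter_upwards [ae_restrict_mem measurableSet_Ioo] with x hx
    calc ENNReal.ofReal x * ∫⁻ y in Ioo 0 1, hardyKernel (-α) (α - 2) y x
        ≤ ENNReal.ofReal x * ENNReal.ofReal (x ^ (-α + (α - 2) + 1) / -(-α + 1)) := by
          gcongr
          exact setLIntegral_hardyKernel_fst_le (by linarith) hx.1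
      _ = ENNReal.ofReal (α - 1)⁻¹ := by
          rw [← ENNReal.ofReal_mul hx.1.le, show -α + (α - 2) + 1 = -1 by ring, Real.rpow_neg_one,
            show -(-α + 1) = α - 1 by ring]
          congr 1
          field_simp [hx.1.ne']
  · filter_upwards [ae_restrict_mem measurableSet_Ioo] with y hy
    rw [setLIntegral_hardyKernel_snd (by linarith) ⟨hy.1, hy.2.le⟩,
      ← ENNReal.ofReal_mul (by positivity), show 2 - α + (α - 2) + 1 = 1 by ring, Real.rpow_one,
      show α - 2 + 1 = α - 1 by ring, div_eq_inv_mul]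

theorem eL2x_eq_lintegral_enorm (f : ℝ → ℝ) :
    eL2x f = (∫⁻ x in Ioo 0 1, ENNReal.ofReal x * ‖f x‖ₑ ^ 2) ^ (1 / 2 : ℝ) := by
  refine congrArg (· ^ (1 / 2 : ℝ)) (setLIntegral_congr_fun measurableSet_Ioo fun x hx => ?_)
  rw [ENNReal.ofReal_mul' hx.1.le, Real.enorm_eq_ofReal_abs, ← ENNReal.ofReal_pow (abs_nonneg _),
    sq_abs, mul_comm]

theorem eL2x_le_of_enorm_le_setLIntegral {f φ : ℝ → ℝ} {K : ℝ → ℝ → ℝ≥0∞} {C : ℝ≥0∞}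
    (hf : ∀ x ∈ Ioo (0 : ℝ) 1, ‖f x‖ₑ ≤ ∫⁻ y in Ioo 0 1, K x y * ‖φ y‖ₑ)
    (hK : ∫⁻ x in Ioo 0 1, ENNReal.ofReal x * (∫⁻ y in Ioo 0 1, K x y * ‖φ y‖ₑ) ^ 2
      ≤ C ^ 2 * ∫⁻ y in Ioo 0 1, ENNReal.ofReal y * ‖φ y‖ₑ ^ 2) :
    eL2x f ≤ C * eL2x φ := by
  have hfK : ∫⁻ x in Ioo 0 1, ENNReal.ofReal x * ‖f x‖ₑ ^ 2
      ≤ C ^ 2 * ∫⁻ y in Ioo 0 1, ENNReal.ofReal y * ‖φ y‖ₑ ^ 2 := by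
    refine le_trans (setLIntegral_mono' measurableSet_Ioo fun x hx => ?_) hK
    gcongr
    exact hf x hx
  rw [eL2x_eq_lintegral_enorm, eL2x_eq_lintegral_enorm]
  calc (∫⁻ x in Ioo 0 1, ENNReal.ofReal x * ‖f x‖ₑ ^ 2) ^ (1 / 2 : ℝ)
      ≤ (C ^ 2 * ∫⁻ y in Ioo 0 1, ENNReal.ofReal y * ‖φ y‖ₑ ^ 2) ^ (1 / 2 : ℝ) := by gcongr
    _ = C * (∫⁻ y in Ioo 0 1, ENNReal.ofReal y * ‖φ y‖ₑ ^ 2) ^ (1 / 2 : ℝ) := by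
        rw [ENNReal.mul_rpow_of_nonneg _ _ (by norm_num), ← ENNReal.rpow_two, ← ENNReal.rpow_mul]
        norm_num

theorem enorm_Aa_div_le {α x : ℝ} (φ : ℝ → ℝ) (hx : x ∈ Ioc 0 1) :
    ‖Aa α φ x / x‖ₑ ≤ ∫⁻ y in Ioo 0 1, hardyKernel (-α - 1) α x y * ‖φ y‖ₑ := by
  have hA : Aa α φ x / x = ∫ y in Ioo 0 x, x ^ (-α - 1) * (y ^ α * φ y) := by
    rw [integral_const_mul, Aa, Real.rpow_sub_one hx.1.ne']
    ring
  rw [hA, setLIntegral_hardyKernel_mul_snd hx.2]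
  refine (enorm_integral_le_lintegral_enorm _).trans_eq
    (setLIntegral_congr_fun measurableSet_Ioo fun y hy => ?_)
  rw [← mul_assoc, enorm_mul, Real.enorm_of_nonneg
    (mul_nonneg (Real.rpow_nonneg hx.1.le _) (Real.rpow_nonneg hy.1.le _))]

theorem enorm_Astar_div_le {α x : ℝ} (φ : ℝ → ℝ) (hx : x ∈ Ioo 0 1) :
    ‖Astar α φ x / x‖ₑ ≤ ∫⁻ y in Ioo 0 1, hardyKernel (1 - α) (α - 2) y x * ‖φ y‖ₑ := by
  have hA : Astar α φ x / x = ∫ y in Ioo x 1, x ^ (α - 2) * (y ^ (1 - α) * φ y) := by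
    rw [integral_const_mul, Astar, show α - 2 = α - 1 - 1 by ring,
      Real.rpow_sub_one hx.1.ne' (α - 1)]
    ring
  rw [hA, setLIntegral_hardyKernel_mul_fst hx.1.le]
  refine (enorm_integral_le_lintegral_enorm _).trans_eq
    (setLIntegral_congr_fun measurableSet_Ioo fun y hy => ?_)
  rw [← mul_assoc, enorm_mul, Real.enorm_of_nonneg
    (mul_nonneg (Real.rpow_nonneg hx.1.le _) (Real.rpow_nonneg (hx.1.trans hy.1).le _)),
    mul_comm (x ^ _)]

/-- For `α > 1` the operators `(1/x)A_α` and `(1/x)A_α^*` are bounded on `L²_x`: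
there is `C = C(α) > 0` with `‖x⁻¹ A_α φ‖ ≤ C‖φ‖` and `‖x⁻¹ A_α^* φ‖ ≤ C‖φ‖`
for every `φ ∈ L²_x`. -/
theorem bounded_on_L2x (α : ℝ) (hα : 1 < α) :
    ∃ C : ℝ, 0 < C ∧ ∀ φ : ℝ → ℝ, Measurable φ → eL2x φ < ⊤ →
      eL2x (fun x => Aa α φ x / x) ≤ ENNReal.ofReal C * eL2x φ ∧
      eL2x (fun x => Astar α φ x / x) ≤ ENNReal.ofReal C * eL2x φ := by
  refine ⟨(α - 1)⁻¹, inv_pos.2 (sub_pos.2 hα), fun φ hφ _ => ⟨?_, ?_⟩⟩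
  · calc eL2x (fun x => Aa α φ x / x) ≤ ENNReal.ofReal α⁻¹ * eL2x φ :=
          eL2x_le_of_enorm_le_setLIntegral (fun x hx => enorm_Aa_div_le φ ⟨hx.1, hx.2.le⟩)
            (setLIntegral_sq_hardyKernel_le (by linarith) hφ.enorm)
      _ ≤ ENNReal.ofReal (α - 1)⁻¹ * eL2x φ := by
          gcongr
          linarith
  · exact eL2x_le_of_enorm_le_setLIntegral (fun x hx => enorm_Astar_div_le φ hx)
      (setLIntegral_sq_hardyKernel_swap_le hα hφ.enorm)
end

section
/- Let α > 1 and let φ : (0,1) → ℝ be differentiable with φ ∈ L²_x and D_{x,α}φ ∈ L²_x. Then sup_{x ∈ (0,1)} |φ(x)| ≤ (2α)^{−1/2} ‖D_{x,α}φ‖_{L²_x}. -/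
open MeasureTheory Set
open scoped ENNReal

/-!
By the product rule `(t^α φ)' = t^α D_{x,α}φ`, so
`x^α φ(x) - t^α φ(t) = ∫ₜˣ y^α D_{x,α}φ(y) dy`. Writing the integrand as
`y^{α-1/2} · y^{1/2} D_{x,α}φ(y)`, Cauchy–Schwarz and `∫₀ˣ y^{2α-1} dy = x^{2α}/(2α)` bound it by
`x^α (2α)^{-1/2} ‖D_{x,α}φ‖_{L²_x}`. The boundary term disappears because `φ ∈ L²_x` forces
`t^α φ(t)` to be arbitrarily small along some sequence `t → 0⁺`.
-/

open Filter Topology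

theorem abs_integral_mul_le_sqrt_mul_sqrt {X : Type*} [MeasurableSpace X] {μ : Measure X}
    {f g : X → ℝ} (hf : MemLp f 2 μ) (hg : MemLp g 2 μ) :
    |∫ a, f a * g a ∂μ| ≤ √(∫ a, f a ^ 2 ∂μ) * √(∫ a, g a ^ 2 ∂μ) := by
  have hL2 : (2 : ℝ≥0∞) = ENNReal.ofReal 2 := by norm_num
  calc |∫ a, f a * g a ∂μ| ≤ ∫ a, ‖f a‖ * ‖g a‖ ∂μ := by
        simpa only [Real.norm_eq_abs, abs_mul] using
          norm_integral_le_integral_norm (μ := μ) (fun a => f a * g a)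
    _ ≤ (∫ a, ‖f a‖ ^ (2 : ℝ) ∂μ) ^ (1 / 2 : ℝ) * (∫ a, ‖g a‖ ^ (2 : ℝ) ∂μ) ^ (1 / 2 : ℝ) :=
        integral_mul_norm_le_Lp_mul_Lq .two_two (hL2 ▸ hf) (hL2 ▸ hg)
    _ = √(∫ a, f a ^ 2 ∂μ) * √(∫ a, g a ^ 2 ∂μ) := by
        simp only [Real.rpow_two, Real.norm_eq_abs, sq_abs, Real.sqrt_eq_rpow]

theorem rpow_sub_half_sq {y : ℝ} (hy : 0 ≤ y) (α : ℝ) :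
    (y ^ (α - 1 / 2)) ^ 2 = y ^ (2 * α - 1) := by
  rw [← Real.rpow_natCast, ← Real.rpow_mul hy]
  ring_nf

theorem rpow_sub_half_mul_sqrt {y : ℝ} (hy : 0 < y) (α : ℝ) : y ^ (α - 1 / 2) * √y = y ^ α := by
  rw [Real.sqrt_eq_rpow, ← Real.rpow_add hy]
  ring_nf

theorem L2xNorm_nonneg (g : ℝ → ℝ) : 0 ≤ L2xNorm g := Real.sqrt_nonneg _

theorem sq_L2xNorm (g : ℝ → ℝ) : L2xNorm g ^ 2 = ∫ x in Ioo (0:ℝ) 1, g x ^ 2 * x :=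
  Real.sq_sqrt (setIntegral_nonneg measurableSet_Ioo fun x hx => by have := hx.1; positivity)

theorem hasDerivAt_rpow_mul {α y : ℝ} {φ : ℝ → ℝ} (hy : 0 < y) (hφ : DifferentiableAt ℝ φ y) :
    HasDerivAt (fun t => t ^ α * φ t) (y ^ α * Dtw α φ y) y := by
  refine ((Real.hasDerivAt_rpow_const (Or.inl hy.ne')).mul hφ.hasDerivAt).congr_deriv ?_
  rw [Dtw, Real.rpow_sub_one hy.ne']
  field_simp
  ring

theorem aestronglyMeasurable_Dtw (α : ℝ) {φ : ℝ → ℝ}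
    (hφ : ∀ x ∈ Ioo (0:ℝ) 1, DifferentiableAt ℝ φ x) :
    AEStronglyMeasurable (Dtw α φ) (volume.restrict (Ioo 0 1)) := by
  have hcont : ContinuousOn (fun x => α / x * φ x) (Ioo 0 1) :=
    (continuousOn_const.div continuousOn_id fun x hx => hx.1.ne').mul
      fun x hx => (hφ x hx).continuousAt.continuousWithinAt
  exact (measurable_deriv φ).aestronglyMeasurable.add
    (hcont.aestronglyMeasurable measurableSet_Ioo)

theorem memLp_rpow_sub_half {α : ℝ} (hα : 0 < α) :
    MemLp (fun y : ℝ => y ^ (α - 1 / 2)) 2 (volume.restrict (Ioo 0 1)) := by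
  refine (memLp_two_iff_integrable_sq (measurable_id.pow_const _).aestronglyMeasurable).2 ?_
  have hint : IntegrableOn (fun y : ℝ => y ^ (2 * α - 1)) (Ioo 0 1) :=
    (intervalIntegral.integrableOn_Ioo_rpow_iff one_pos).2 (by linarith)
  exact hint.congr_fun (fun y hy => (rpow_sub_half_sq hy.1.le α).symm) measurableSet_Ioo

theorem memLp_sqrt_mul {g : ℝ → ℝ} (hmeas : AEStronglyMeasurable g (volume.restrict (Ioo 0 1)))
    (hg : MemL2x g) : MemLp (fun y => √y * g y) 2 (volume.restrict (Ioo 0 1)) := by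
  refine (memLp_two_iff_integrable_sq
    (Real.continuous_sqrt.aestronglyMeasurable.mul hmeas)).2 ?_
  refine hg.congr_fun (fun y hy => ?_) measurableSet_Ioo
  show g y ^ 2 * y = (√y * g y) ^ 2
  rw [mul_pow, Real.sq_sqrt hy.1.le, mul_comm]

theorem integrableOn_rpow_mul {α : ℝ} {g : ℝ → ℝ} (hα : 0 < α)
    (hmeas : AEStronglyMeasurable g (volume.restrict (Ioo 0 1))) (hg : MemL2x g) :
    IntegrableOn (fun y => y ^ α * g y) (Ioo 0 1) := by
  refine IntegrableOn.congr_fun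
    ((memLp_rpow_sub_half hα).integrable_mul (memLp_sqrt_mul hmeas hg)) (fun y hy => ?_)
    measurableSet_Ioo
  simp only [Pi.mul_apply, ← mul_assoc, rpow_sub_half_mul_sqrt hy.1]

theorem integral_Ioc_rpow_le {α t x : ℝ} (hα : 0 < α) (ht : 0 ≤ t) (htx : t ≤ x) :
    ∫ y in Ioc t x, y ^ (2 * α - 1) ≤ x ^ (2 * α) / (2 * α) := by
  rw [← intervalIntegral.integral_of_le htx,
    integral_rpow (Or.inl (by linarith : -1 < 2 * α - 1)), sub_add_cancel]
  gcongr
  exact sub_le_self _ (Real.rpow_nonneg ht _)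

theorem abs_intervalIntegral_rpow_mul_le {α t x : ℝ} {g : ℝ → ℝ} (hα : 0 < α)
    (hmeas : AEStronglyMeasurable g (volume.restrict (Ioo 0 1))) (hg : MemL2x g)
    (ht : 0 ≤ t) (htx : t ≤ x) (hx : x < 1) :
    |∫ y in t..x, y ^ α * g y| ≤ x ^ α * (2 * α) ^ (-(1 / 2) : ℝ) * L2xNorm g := by
  have hsub : Ioc t x ⊆ Ioo 0 1 := fun y hy => ⟨ht.trans_lt hy.1, hy.2.trans_lt hx⟩
  have hμ : volume.restrict (Ioc t x) ≤ volume.restrict (Ioo 0 1) :=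
    Measure.restrict_mono hsub le_rfl
  have hweight : ∫ y in Ioc t x, (y ^ (α - 1 / 2)) ^ 2 ≤ x ^ (2 * α) / (2 * α) := by
    rw [setIntegral_congr_fun measurableSet_Ioc
      fun y hy => rpow_sub_half_sq (ht.trans hy.1.le) α]
    exact integral_Ioc_rpow_le hα ht htx
  have hnorm : ∫ y in Ioc t x, (√y * g y) ^ 2 ≤ L2xNorm g ^ 2 := by
    rw [sq_L2xNorm, setIntegral_congr_fun measurableSet_Ioc fun y hy => by
      rw [mul_pow, Real.sq_sqrt (ht.trans hy.1.le), mul_comm]]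
    exact setIntegral_mono_set hg
      (ae_restrict_of_forall_mem measurableSet_Ioo fun y hy => by have := hy.1; positivity)
      hsub.eventuallyLE
  have hsplit : ∀ y ∈ Ioc t x, y ^ α * g y = y ^ (α - 1 / 2) * (√y * g y) := fun y hy => by
    rw [← mul_assoc, rpow_sub_half_mul_sqrt (ht.trans_lt hy.1)]
  rw [intervalIntegral.integral_of_le htx, setIntegral_congr_fun measurableSet_Ioc hsplit]
  calc _ ≤ √(∫ y in Ioc t x, (y ^ (α - 1 / 2)) ^ 2) * √(∫ y in Ioc t x, (√y * g y) ^ 2) :=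
        abs_integral_mul_le_sqrt_mul_sqrt ((memLp_rpow_sub_half hα).mono_measure hμ)
          ((memLp_sqrt_mul hmeas hg).mono_measure hμ)
    _ ≤ √(x ^ (2 * α) / (2 * α)) * √(L2xNorm g ^ 2) := by gcongr
    _ = x ^ α * (2 * α) ^ (-(1 / 2) : ℝ) * L2xNorm g := by
        rw [Real.sqrt_sq (L2xNorm_nonneg g), Real.sqrt_div' _ (by positivity),
          Real.sqrt_eq_rpow, Real.sqrt_eq_rpow, ← Real.rpow_mul (ht.trans htx),
          Real.rpow_neg (by positivity)]
        ring_nf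

theorem abs_rpow_mul_le_add {α t x : ℝ} {φ : ℝ → ℝ} (hα : 0 < α)
    (hdiff : ∀ x ∈ Ioo (0:ℝ) 1, DifferentiableAt ℝ φ x) (hDφ : MemL2x (Dtw α φ))
    (ht : 0 < t) (htx : t ≤ x) (hx : x < 1) :
    |x ^ α * φ x| ≤ |t ^ α * φ t| + x ^ α * (2 * α) ^ (-(1 / 2) : ℝ) * L2xNorm (Dtw α φ) := by
  have hsub : uIcc t x ⊆ Ioo 0 1 := by
    rw [uIcc_of_le htx]
    exact fun y hy => ⟨ht.trans_le hy.1, hy.2.trans_lt hx⟩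
  have hmeas := aestronglyMeasurable_Dtw α hdiff
  have hftc : ∫ y in t..x, y ^ α * Dtw α φ y = x ^ α * φ x - t ^ α * φ t :=
    intervalIntegral.integral_eq_sub_of_hasDerivAt
      (fun y hy => hasDerivAt_rpow_mul (hsub hy).1 (hdiff y (hsub hy)))
      ((integrableOn_rpow_mul hα hmeas hDφ).mono_set hsub).intervalIntegrable
  calc |x ^ α * φ x| = |t ^ α * φ t + ∫ y in t..x, y ^ α * Dtw α φ y| := by
        rw [hftc, add_sub_cancel]
    _ ≤ |t ^ α * φ t| + |∫ y in t..x, y ^ α * Dtw α φ y| := abs_add_le _ _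
    _ ≤ _ := by
        gcongr
        exact abs_intervalIntegral_rpow_mul_le hα hmeas hDφ ht.le htx hx

theorem frequently_abs_rpow_mul_lt {α δ : ℝ} {φ : ℝ → ℝ} (hα : 1 ≤ α) (hφ : MemL2x φ)
    (hδ : 0 < δ) : ∃ᶠ t in 𝓝[>] 0, |t ^ α * φ t| < δ := by
  intro hlarge
  -- otherwise `φ(t)² t = (t^α φ(t))² t^{1-2α} ≥ δ² t^{1-2α}` near `0`, not integrable as `α ≥ 1`
  obtain ⟨η, hη, hηsub⟩ := mem_nhdsGT_iff_exists_Ioo_subset.1 hlarge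
  have hε : (0 : ℝ) < min η 1 := lt_min hη one_pos
  have hdom : ∀ t ∈ Ioo 0 (min η 1), ‖t ^ (1 - 2 * α)‖ ≤ φ t ^ 2 * t / δ ^ 2 := by
    intro t ht
    have hδt : δ ≤ |t ^ α * φ t| := not_lt.1 (hηsub ⟨ht.1, ht.2.trans_le (min_le_left _ _)⟩)
    have ht0 := ht.1
    rw [Real.norm_of_nonneg (by positivity), le_div_iff₀ (by positivity)]
    calc t ^ (1 - 2 * α) * δ ^ 2 ≤ t ^ (1 - 2 * α) * |t ^ α * φ t| ^ 2 := by gcongr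
      _ = φ t ^ 2 * t := by
        rw [sq_abs, mul_pow, ← Real.rpow_natCast, ← Real.rpow_mul ht0.le, ← mul_assoc,
          ← Real.rpow_add ht0, show 1 - 2 * α + α * ((2 : ℕ) : ℝ) = 1 by push_cast; ring,
          Real.rpow_one, mul_comm]
  have hint : IntegrableOn (fun t => t ^ (1 - 2 * α)) (Ioo 0 (min η 1)) :=
    Integrable.mono' ((hφ.mono_set (Ioo_subset_Ioo_right (min_le_right _ _))).div_const _)
      (measurable_id.pow_const _).aestronglyMeasurable
      (ae_restrict_of_forall_mem measurableSet_Ioo hdom)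
  linarith [(intervalIntegral.integrableOn_Ioo_rpow_iff hε).1 hint]

/-- For `α > 1` and `φ` differentiable on `(0,1)` with `φ ∈ L²_x` and `D_{x,α} φ ∈ L²_x`,
one has the pointwise bound `|φ(x)| ≤ (2α)^{−1/2} ‖D_{x,α} φ‖_{L²_x}` on `(0,1)`. -/
theorem sup_bound_twisted (α : ℝ) (hα : 1 < α) (φ : ℝ → ℝ)
    (hdiff : ∀ x ∈ Ioo (0:ℝ) 1, DifferentiableAt ℝ φ x)
    (hφ : MemL2x φ) (hDφ : MemL2x (Dtw α φ)) :
    ∀ x ∈ Ioo (0:ℝ) 1, |φ x| ≤ (2*α) ^ (-(1/2) : ℝ) * L2xNorm (Dtw α φ) := by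
  rintro x ⟨hx0, hx1⟩
  have hxα : 0 < x ^ α := Real.rpow_pos_of_pos hx0 α
  have hnear : ∀ δ > 0,
      x ^ α * |φ x| ≤ x ^ α * ((2 * α) ^ (-(1 / 2) : ℝ) * L2xNorm (Dtw α φ)) + δ := by
    intro δ hδ
    obtain ⟨t, hsmall, ht⟩ :=
      ((frequently_abs_rpow_mul_lt hα.le hφ hδ).and_eventually (Ioo_mem_nhdsGT hx0)).exists
    have hbound := abs_rpow_mul_le_add (by linarith) hdiff hDφ ht.1 ht.2.le hx1
    rw [abs_mul, abs_of_pos hxα] at hbound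
    linarith
  exact le_of_mul_le_mul_left (le_of_forall_pos_le_add hnear) hxα
end
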